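/- arXiv:1203.2664 — 5 statements merged into one kernel-verified Lean document; each statement's English description precedes it below -/
import Mathlib

section
/- Let X₁, X₂ be subspaces of E. Then X₁ ⊥g∘ X₂ if and only if there exists a subspace Z such that Z ⊥x X₂ and (X₁ ∩ X₂) ⊔ Z = X₁. -/
/-- `Perp X Y`: every vector in the direction of `X` is orthogonal to every
vector in the direction of `Y`. -/
def Perp {E : Type*} [NormedAddCommGroup E] [InnerProductSpace ℝ E]
    (X Y : AffineSubspace ℝ E) : Prop :=
  ∀ u ∈ X.direction, ∀ v ∈ Y.direction, (inner ℝ u v : ℝ) = 0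

/-- `PerpX X Y`: `X ⊥ Y` and `X ∩ Y ≠ ∅`. -/
def PerpX {E : Type*} [NormedAddCommGroup E] [InnerProductSpace ℝ E]
    (X Y : AffineSubspace ℝ E) : Prop :=
  Perp X Y ∧ ((X : Set E) ∩ (Y : Set E)).Nonempty

/-- `PerpGo X₁ X₂`: the relation `⊥g∘`. -/
def PerpGo {E : Type*} [NormedAddCommGroup E] [InnerProductSpace ℝ E]
    (X₁ X₂ : AffineSubspace ℝ E) : Prop :=
  ∃ q : E, q ∈ X₁ ⊓ X₂ ∧ ∃ Z₁ Z₂ : AffineSubspace ℝ E,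
    q ∈ Z₁ ∧ q ∈ Z₂ ∧ PerpX Z₁ (X₁ ⊓ X₂) ∧ PerpX Z₂ (X₁ ⊓ X₂) ∧ PerpX Z₁ Z₂ ∧
    (X₁ ⊓ X₂) ⊔ Z₁ = X₁ ∧ (X₁ ⊓ X₂) ⊔ Z₂ = X₂

/-- `PerpG X₁ X₂`: the relation `⊥g`. -/
def PerpG {E : Type*} [NormedAddCommGroup E] [InnerProductSpace ℝ E]
    (X₁ X₂ : AffineSubspace ℝ E) : Prop :=
  PerpGo X₁ X₂ ∧ X₁ ⊓ X₂ ≠ X₁ ∧ X₁ ⊓ X₂ ≠ X₂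

/-- Dimension of an affine subspace: the dimension of its direction. -/
noncomputable def adim {E : Type*} [NormedAddCommGroup E] [InnerProductSpace ℝ E]
    (X : AffineSubspace ℝ E) : ℕ :=
  Module.finrank ℝ X.direction

/-!
For `⇒`, `X₂ = (X₁ ∩ X₂) ⊔ Z₂` and `Z₁` is orthogonal to both pieces, so `Z₁ ⊥x X₂`.
For `⇐`, keep `Z₁ := Z` and take for `Z₂` the orthogonal complement of `X₁ ∩ X₂` inside `X₂`,
through a common point `q` of `Z` and `X₂`.
-/

section AffinePerp

open AffineSubspace

variable {E : Type*} [NormedAddCommGroup E] [InnerProductSpace ℝ E]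

theorem direction_sup_of_mem_of_mem {s₁ s₂ : AffineSubspace ℝ E} {p : E}
    (hp₁ : p ∈ s₁) (hp₂ : p ∈ s₂) :
    (s₁ ⊔ s₂).direction = s₁.direction ⊔ s₂.direction := by
  rw [direction_sup hp₁ hp₂, vsub_self, Submodule.span_singleton_eq_bot.2 rfl, sup_bot_eq]

theorem Perp.mono_right {X Y Y' : AffineSubspace ℝ E} (h : Perp X Y)
    (hY : Y'.direction ≤ Y.direction) : Perp X Y' :=
  fun u hu v hv => h u hu v (hY hv)

theorem Perp.sup_right {X Y Y' : AffineSubspace ℝ E} {p : E} (h : Perp X Y) (h' : Perp X Y')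
    (hp : p ∈ Y) (hp' : p ∈ Y') : Perp X (Y ⊔ Y') := by
  intro u hu v hv
  rw [direction_sup_of_mem_of_mem hp hp'] at hv
  obtain ⟨a, ha, b, hb, rfl⟩ := Submodule.mem_sup.1 hv
  rw [inner_add_right, h u hu a ha, h' u hu b hb, add_zero]

theorem perp_mk'_orthogonal_inf (q : E) (Y : AffineSubspace ℝ E) (K : Submodule ℝ E) :
    Perp (mk' q (Y.directionᗮ ⊓ K)) Y := by
  intro u hu v hv
  rw [direction_mk'] at hu
  exact real_inner_comm v u ▸ hu.1 v hv

theorem sup_mk'_orthogonal_inf_eq {X Y : AffineSubspace ℝ E} {q : E} (hYX : Y ≤ X) (hq : q ∈ Y)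
    [Y.direction.HasOrthogonalProjection] :
    Y ⊔ mk' q (Y.directionᗮ ⊓ X.direction) = X := by
  refine ext_of_direction_eq ?_ ⟨q, (le_sup_left : Y ≤ _) hq, hYX hq⟩
  rw [direction_sup_of_mem_of_mem hq (self_mem_mk' q _), direction_mk']
  exact Submodule.sup_orthogonal_inf_of_hasOrthogonalProjection (direction_le hYX)

end AffinePerp

variable {E : Type*} [NormedAddCommGroup E] [InnerProductSpace ℝ E] [FiniteDimensional ℝ E]

theorem stmt0_general (X₁ X₂ : AffineSubspace ℝ E) :
    PerpGo X₁ X₂ ↔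
      ∃ Z : AffineSubspace ℝ E, (Z : Set E).Nonempty ∧ PerpX Z X₂ ∧ (X₁ ⊓ X₂) ⊔ Z = X₁ := by
  constructor
  · rintro ⟨q, hq, Z₁, Z₂, hqZ₁, hqZ₂, ⟨hZ₁I, -⟩, -, ⟨hZ₁Z₂, -⟩, hsup₁, hsup₂⟩
    refine ⟨Z₁, ⟨q, hqZ₁⟩, ⟨?_, q, hqZ₁, ((AffineSubspace.mem_inf_iff q X₁ X₂).1 hq).2⟩, hsup₁⟩
    rw [← hsup₂]
    exact hZ₁I.sup_right hZ₁Z₂ hq hqZ₂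
  · rintro ⟨Z, -, ⟨hZX₂, q, hqZ, hqX₂⟩, hsup⟩
    have hq : q ∈ X₁ ⊓ X₂ := ⟨(hsup ▸ le_sup_right : Z ≤ X₁) hqZ, hqX₂⟩
    set Z₂ : AffineSubspace ℝ E := .mk' q ((X₁ ⊓ X₂).directionᗮ ⊓ X₂.direction)
    have hqZ₂ : q ∈ Z₂ := AffineSubspace.self_mem_mk' _ _
    have hZ₂X₂ : Z₂.direction ≤ X₂.direction := by
      rw [AffineSubspace.direction_mk']
      exact inf_le_right
    refine ⟨q, hq, Z, Z₂, hqZ, hqZ₂,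
      ⟨hZX₂.mono_right (AffineSubspace.direction_le inf_le_right), q, hqZ, hq⟩,
      ⟨perp_mk'_orthogonal_inf q _ _, q, hqZ₂, hq⟩,
      ⟨hZX₂.mono_right hZ₂X₂, q, hqZ, hqZ₂⟩, hsup,
      sup_mk'_orthogonal_inf_eq inf_le_right hq⟩

theorem stmt0 (X₁ X₂ : AffineSubspace ℝ E)
    (hX₁ : (X₁ : Set E).Nonempty) (hX₂ : (X₂ : Set E).Nonempty) :
    PerpGo X₁ X₂ ↔
      ∃ Z : AffineSubspace ℝ E, (Z : Set E).Nonempty ∧ PerpX Z X₂ ∧ (X₁ ⊓ X₂) ⊔ Z = X₁ :=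
  stmt0_general X₁ X₂
end

section
/- For subspaces X₁, X₂ of E: X₁ ⊥g∘ X₂ if and only if X₁ ⊥g X₂ or X₁ ⊆ X₂ or X₂ ⊆ X₁. -/
/-
A nested pair `X₁ ≤ X₂` is always `⊥g∘`: through a point `q ∈ X₁` take `Z₁ = {q}` and `Z₂` the flat
through `q` whose direction is the orthogonal complement of `dir X₁` inside `dir X₂`; then
`X₁ ⊔ Z₂ = X₂` because `dir X₁ ⊔ (dir X₁ᗮ ⊓ dir X₂) = dir X₂`.
-/

section

variable {E : Type*} [NormedAddCommGroup E] [InnerProductSpace ℝ E]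

open Submodule AffineSubspace

theorem perp_iff_isOrtho {X Y : AffineSubspace ℝ E} : Perp X Y ↔ X.direction ⟂ Y.direction :=
  isOrtho_iff_inner_eq.symm

theorem PerpX.symm {X Y : AffineSubspace ℝ E} (h : PerpX X Y) : PerpX Y X :=
  ⟨perp_iff_isOrtho.2 (perp_iff_isOrtho.1 h.1).symm, by rw [Set.inter_comm]; exact h.2⟩

theorem perpX_of_isOrtho {X Y : AffineSubspace ℝ E} {q : E} (h : X.direction ⟂ Y.direction)
    (hX : q ∈ X) (hY : q ∈ Y) : PerpX X Y :=
  ⟨perp_iff_isOrtho.2 h, q, hX, hY⟩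

theorem PerpGo.symm {X₁ X₂ : AffineSubspace ℝ E} (h : PerpGo X₁ X₂) : PerpGo X₂ X₁ := by
  obtain ⟨q, hq, Z₁, Z₂, hZ₁, hZ₂, h₁, h₂, h₁₂, hX₁, hX₂⟩ := h
  rw [inf_comm] at hq h₁ h₂ hX₁ hX₂
  exact ⟨q, hq, Z₂, Z₁, hZ₂, hZ₁, h₂, h₁, h₁₂.symm, hX₂, hX₁⟩

theorem AffineSubspace.sup_mk'_of_mem {X : AffineSubspace ℝ E} {q : E} (hq : q ∈ X)
    (W : Submodule ℝ E) : X ⊔ mk' q W = mk' q (X.direction ⊔ W) := by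
  refine ext_of_direction_eq ?_ ⟨q, le_sup_left (b := mk' q W) hq, self_mem_mk' q _⟩
  rw [direction_sup hq (self_mem_mk' q W), vsub_self, span_zero_singleton, sup_bot_eq,
    direction_mk', direction_mk']

theorem perpGo_of_le {X₁ X₂ : AffineSubspace ℝ E} [X₁.direction.HasOrthogonalProjection]
    (h : X₁ ≤ X₂) (hX₁ : (X₁ : Set E).Nonempty) : PerpGo X₁ X₂ := by
  obtain ⟨q, hq⟩ := hX₁
  rw [PerpGo, inf_eq_left.mpr h]
  refine ⟨q, hq, mk' q ⊥, mk' q (X₁.directionᗮ ⊓ X₂.direction), self_mem_mk' q _,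
    self_mem_mk' q _, ?_, ?_, ?_, ?_, ?_⟩
  · exact perpX_of_isOrtho (by rw [direction_mk']; exact isOrtho_bot_left) (self_mem_mk' q _) hq
  · refine perpX_of_isOrtho ?_ (self_mem_mk' q _) hq
    rw [direction_mk']
    exact (isOrtho_orthogonal_left _).mono_left inf_le_left
  · exact perpX_of_isOrtho (by rw [direction_mk']; exact isOrtho_bot_left) (self_mem_mk' q _)
      (self_mem_mk' q _)
  · rw [sup_mk'_of_mem hq, sup_bot_eq, mk'_eq hq]
  · rw [sup_mk'_of_mem hq, sup_orthogonal_inf_of_hasOrthogonalProjection (direction_le h),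
      mk'_eq (h hq)]

end

variable {E : Type*} [NormedAddCommGroup E] [InnerProductSpace ℝ E] [FiniteDimensional ℝ E]

theorem stmt3 (X₁ X₂ : AffineSubspace ℝ E)
    (hX₁ : (X₁ : Set E).Nonempty) (hX₂ : (X₂ : Set E).Nonempty) :
    PerpGo X₁ X₂ ↔ (PerpG X₁ X₂ ∨ X₁ ≤ X₂ ∨ X₂ ≤ X₁) := by
  refine ⟨fun h => ?_, ?_⟩
  · by_cases h₁ : X₁ ⊓ X₂ = X₁
    · exact .inr <| .inl <| inf_eq_left.mp h₁
    by_cases h₂ : X₁ ⊓ X₂ = X₂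
    · exact .inr <| .inr <| inf_eq_right.mp h₂
    exact .inl ⟨h, h₁, h₂⟩
  · rintro (h | h | h)
    · exact h.1
    · exact perpGo_of_le h hX₁
    · exact (perpGo_of_le h hX₂).symm
end

section
/- Let A, B, C be subspaces of E. If A ⊥g B, B is parallel to C, and A ∩ C ≠ ∅, then A ⊥g C. -/
/-
Translations preserve directions, meets and joins, so they carry a witness of `X₁ ⊥g X₂` to one
of `(w + X₁) ⊥g (w + X₂)`. For `q ∈ A ∩ B` and `p ∈ A ∩ C`, the translation by `w = p - q` fixes
`A`, since `w` lies in its direction, and carries `B` onto the parallel subspace `C`.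
-/

open Pointwise

namespace AffineSubspace

variable {k V P : Type*} [Ring k] [AddCommGroup V] [Module k V] [AddTorsor V P]

theorem pointwise_vadd_sup (v : V) (s t : AffineSubspace k P) :
    v +ᵥ (s ⊔ t) = (v +ᵥ s) ⊔ (v +ᵥ t) := by
  simp only [pointwise_vadd_eq_map, map_sup]

theorem pointwise_vadd_inf (v : V) (s t : AffineSubspace k P) :
    v +ᵥ (s ⊓ t) = (v +ᵥ s) ⊓ (v +ᵥ t) := by
  simp only [pointwise_vadd_eq_map]
  exact map_inf_eq _ (AffineEquiv.constVAdd k P v).injective s t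

theorem Parallel.vsub_vadd_eq {s t : AffineSubspace k P} (h : s.Parallel t) {q p : P}
    (hq : q ∈ s) (hp : p ∈ t) : (p -ᵥ q) +ᵥ s = t := by
  refine ext_of_direction_eq (by rw [pointwise_vadd_direction, h.direction_eq]) ⟨p, ?_, hp⟩
  have := (vadd_mem_pointwise_vadd_iff (v := p -ᵥ q)).2 hq
  rwa [vsub_vadd] at this

end AffineSubspace

open AffineSubspace

section Translation

variable {V : Type*} [NormedAddCommGroup V] [InnerProductSpace ℝ V]

theorem perp_vadd_iff (v : V) (X Y : AffineSubspace ℝ V) :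
    Perp (v +ᵥ X) (v +ᵥ Y) ↔ Perp X Y := by
  simp only [Perp, pointwise_vadd_direction]

theorem PerpX.vadd {X Y : AffineSubspace ℝ V} (h : PerpX X Y) (v : V) :
    PerpX (v +ᵥ X) (v +ᵥ Y) := by
  refine ⟨(perp_vadd_iff v X Y).2 h.1, ?_⟩
  rw [coe_pointwise_vadd, coe_pointwise_vadd, ← Set.vadd_set_inter]
  exact h.2.vadd_set

theorem PerpGo.vadd {X₁ X₂ : AffineSubspace ℝ V} (h : PerpGo X₁ X₂) (v : V) :
    PerpGo (v +ᵥ X₁) (v +ᵥ X₂) := by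
  obtain ⟨q, hq, Z₁, Z₂, hqZ₁, hqZ₂, hZ₁, hZ₂, hZ₁₂, hX₁, hX₂⟩ := h
  simp only [PerpGo, ← pointwise_vadd_inf]
  refine ⟨v +ᵥ q, vadd_mem_pointwise_vadd_iff.2 hq, v +ᵥ Z₁, v +ᵥ Z₂,
    vadd_mem_pointwise_vadd_iff.2 hqZ₁, vadd_mem_pointwise_vadd_iff.2 hqZ₂,
    hZ₁.vadd v, hZ₂.vadd v, hZ₁₂.vadd v, ?_, ?_⟩
  · rw [← pointwise_vadd_sup, hX₁]
  · rw [← pointwise_vadd_sup, hX₂]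

theorem PerpG.vadd {X₁ X₂ : AffineSubspace ℝ V} (h : PerpG X₁ X₂) (v : V) :
    PerpG (v +ᵥ X₁) (v +ᵥ X₂) := by
  obtain ⟨hgo, hne₁, hne₂⟩ := h
  rw [PerpG, ← pointwise_vadd_inf, Ne, Ne, vadd_left_cancel_iff, vadd_left_cancel_iff]
  exact ⟨hgo.vadd v, hne₁, hne₂⟩

end Translation

variable {E : Type*} [NormedAddCommGroup E] [InnerProductSpace ℝ E] [FiniteDimensional ℝ E]

theorem stmt7_general (A B C : AffineSubspace ℝ E)
    (h₁ : PerpG A B) (h₂ : AffineSubspace.Parallel B C)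
    (h₃ : ((A : Set E) ∩ (C : Set E)).Nonempty) :
    PerpG A C := by
  obtain ⟨q, hqAB, -⟩ := h₁.1
  obtain ⟨hqA, hqB⟩ := (mem_inf_iff q A B).1 hqAB
  obtain ⟨p, hpA, hpC⟩ := h₃
  have hA : (p -ᵥ q) +ᵥ A = A := (Parallel.refl A).vsub_vadd_eq hqA hpA
  have hB : (p -ᵥ q) +ᵥ B = C := h₂.vsub_vadd_eq hqB hpC
  simpa only [hA, hB] using h₁.vadd (p -ᵥ q)

theorem stmt7 (A B C : AffineSubspace ℝ E)
    (hA : (A : Set E).Nonempty) (hB : (B : Set E).Nonempty) (hC : (C : Set E).Nonempty)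
    (h₁ : PerpG A B) (h₂ : AffineSubspace.Parallel B C)
    (h₃ : ((A : Set E) ∩ (C : Set E)).Nonempty) :
    PerpG A C :=
  stmt7_general A B C h₁ h₂ h₃
end

section
/- Let A, B, C be subspaces of E. If A ⊥g∘ B and A ∩ B ⊆ C ⊆ B, then A ⊥g∘ C. -/
/-! Shrinking `B` to `C` leaves `A ⊓ C = A ⊓ B`, so the complement `Z₁` of `A ⊓ B` in `A` can be
kept, while `Z₂` is replaced by `Z₂ ⊓ C`. That this is still a complement of `A ⊓ B` in `C` is the
modular law, which holds for affine subspaces through a common point because it holds for their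
directions. -/

namespace AffineSubspace

variable {k V P : Type*} [Ring k] [AddCommGroup V] [Module k V] [AddTorsor V P]

theorem direction_sup_of_mem {s₁ s₂ : AffineSubspace k P} {p : P} (h₁ : p ∈ s₁) (h₂ : p ∈ s₂) :
    (s₁ ⊔ s₂).direction = s₁.direction ⊔ s₂.direction := by
  rw [direction_sup h₁ h₂, vsub_self, Submodule.span_zero_singleton, sup_bot_eq]

theorem sup_inf_assoc_of_le_of_mem {x z : AffineSubspace k P} (y : AffineSubspace k P) {p : P}
    (h : x ≤ z) (hx : p ∈ x) (hy : p ∈ y) : (x ⊔ y) ⊓ z = x ⊔ y ⊓ z := by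
  have hpz : p ∈ z := h hx
  have hpl : p ∈ (x ⊔ y) ⊓ z := ⟨le_sup_left (a := x) hx, hpz⟩
  have hpr : p ∈ x ⊔ y ⊓ z := le_sup_left (a := x) hx
  refine ext_of_direction_eq ?_ ⟨p, hpl, hpr⟩
  rw [direction_inf_of_mem_inf hpl, direction_sup_of_mem hx hy,
    direction_sup_of_mem hx (show p ∈ y ⊓ z from ⟨hy, hpz⟩), direction_inf_of_mem hy hpz]
  exact sup_inf_assoc_of_le _ (direction_le h)

end AffineSubspace

section

variable {E : Type*} [NormedAddCommGroup E] [InnerProductSpace ℝ E]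

theorem Perp.mono {X X' Y Y' : AffineSubspace ℝ E} (h : Perp X Y) (hX : X' ≤ X) (hY : Y' ≤ Y) :
    Perp X' Y' :=
  fun u hu v hv => h u (AffineSubspace.direction_le hX hu) v (AffineSubspace.direction_le hY hv)

theorem PerpX.of_le_of_mem {X X' Y Y' : AffineSubspace ℝ E} {q : E} (h : PerpX X Y)
    (hX : X' ≤ X) (hY : Y' ≤ Y) (hqX : q ∈ X') (hqY : q ∈ Y') : PerpX X' Y' :=
  ⟨h.1.mono hX hY, q, hqX, hqY⟩

end

variable {E : Type*} [NormedAddCommGroup E] [InnerProductSpace ℝ E] [FiniteDimensional ℝ E]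

theorem stmt17_general (A B C : AffineSubspace ℝ E)
    (h₁ : PerpGo A B) (h₂ : A ⊓ B ≤ C) (h₃ : C ≤ B) :
    PerpGo A C := by
  obtain ⟨q, hq, Z₁, Z₂, hqZ₁, hqZ₂, hZ₁, hZ₂, hZ₁Z₂, hA, hB⟩ := h₁
  have hAC : A ⊓ C = A ⊓ B := le_antisymm (inf_le_inf_left A h₃) (le_inf inf_le_left h₂)
  have hqC : q ∈ C := h₂ hq
  have hqZ₂C : q ∈ Z₂ ⊓ C := ⟨hqZ₂, hqC⟩
  have hC : A ⊓ B ⊔ Z₂ ⊓ C = C := by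
    rw [← AffineSubspace.sup_inf_assoc_of_le_of_mem Z₂ h₂ hq hqZ₂, hB, inf_eq_right.2 h₃]
  rw [PerpGo, hAC]
  exact ⟨q, hq, Z₁, Z₂ ⊓ C, hqZ₁, hqZ₂C, hZ₁,
    hZ₂.of_le_of_mem inf_le_left le_rfl hqZ₂C hq,
    hZ₁Z₂.of_le_of_mem le_rfl inf_le_left hqZ₁ hqZ₂C, hA, hC⟩

theorem stmt17 (A B C : AffineSubspace ℝ E)
    (hA : (A : Set E).Nonempty) (hB : (B : Set E).Nonempty) (hC : (C : Set E).Nonempty)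
    (h₁ : PerpGo A B) (h₂ : A ⊓ B ≤ C) (h₃ : C ≤ B) :
    PerpGo A C :=
  stmt17_general A B C h₁ h₂ h₃
end

section
/- Let A, B, C be subspaces of E. If A ⊥g∘ B and A ∩ B ⊆ C ⊆ A, then A ⊥g∘ (B ⊔ C). -/
namespace Submodule

theorem inf_sup_eq_of_le_of_le_orthogonal {𝕜 F : Type*} [RCLike 𝕜] [NormedAddCommGroup F]
    [InnerProductSpace 𝕜 F] {A C Z : Submodule 𝕜 F} (hCA : C ≤ A) (hZA : Z ≤ Aᗮ) :
    A ⊓ (C ⊔ Z) = C := by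
  have hZA_bot : Z ⊓ A = ⊥ :=
    le_bot_iff.1 <| (inf_le_inf_right A hZA).trans_eq <|
      (inf_comm _ _).trans A.inf_orthogonal_eq_bot
  rw [inf_comm, sup_inf_assoc_of_le Z hCA, hZA_bot, sup_bot_eq]

end Submodule

section Orthogonality

variable {E : Type*} [NormedAddCommGroup E] [InnerProductSpace ℝ E]

section Perp

variable {X Y Z : AffineSubspace ℝ E}

theorem perp_iff_direction_le_orthogonal :
    Perp X Y ↔ Y.direction ≤ X.directionᗮ := by
  simp only [Perp, SetLike.le_def, Submodule.mem_orthogonal]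
  exact forall₂_comm

theorem Perp.symm (h : Perp X Y) : Perp Y X := fun u hu v hv ↦
  (real_inner_comm v u).trans (h v hv u hu)

theorem Perp.mono_right_s18 (h : Perp X Y) (hY : Z ≤ Y) : Perp X Z := fun u hu v hv ↦
  h u hu v (AffineSubspace.direction_le hY hv)

theorem Perp.sup_right_s18 {q : E} (hY : Perp X Y) (hZ : Perp X Z) (hqY : q ∈ Y) (hqZ : q ∈ Z) :
    Perp X (Y ⊔ Z) := by
  rw [perp_iff_direction_le_orthogonal] at hY hZ ⊢
  rw [AffineSubspace.direction_sup_eq_sup_direction hqY hqZ]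
  exact sup_le hY hZ

end Perp

namespace AffineSubspace

variable {A C Z : AffineSubspace ℝ E} {q : E}

theorem inf_sup_eq_of_le_of_perp (hCA : C ≤ A) (hZA : Perp Z A) (hqC : q ∈ C) (hqZ : q ∈ Z) :
    A ⊓ (C ⊔ Z) = C := by
  have hqA : q ∈ A := hCA hqC
  have hqCZ : q ∈ C ⊔ Z := le_sup_left (a := C) hqC
  refine ext_of_direction_eq ?_ ⟨q, ⟨hqA, hqCZ⟩, hqC⟩
  rw [direction_inf_of_mem hqA hqCZ, direction_sup_eq_sup_direction hqC hqZ]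
  exact Submodule.inf_sup_eq_of_le_of_le_orthogonal (direction_le hCA)
    (perp_iff_direction_le_orthogonal.1 hZA.symm)

theorem exists_perp_sup_eq_of_le [C.direction.HasOrthogonalProjection] (hCA : C ≤ A)
    (hqC : q ∈ C) : ∃ Z : AffineSubspace ℝ E, q ∈ Z ∧ Z ≤ A ∧ Perp Z C ∧ C ⊔ Z = A := by
  have hqZ : q ∈ mk' q (C.directionᗮ ⊓ A.direction) := self_mem_mk' q _
  refine ⟨mk' q (C.directionᗮ ⊓ A.direction), hqZ, ?_, ?_, ?_⟩
  · conv_rhs => rw [← mk'_eq (hCA hqC)]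
    exact (mk'_le_mk'_iff q).2 inf_le_right
  · rw [perp_iff_direction_le_orthogonal, direction_mk']
    exact le_trans (Submodule.le_orthogonal_orthogonal _) (Submodule.orthogonal_le inf_le_left)
  · refine ext_of_direction_eq ?_ ⟨q, le_sup_left (a := C) hqC, hCA hqC⟩
    rw [direction_sup_eq_sup_direction hqC hqZ, direction_mk',
      Submodule.sup_orthogonal_inf_of_hasOrthogonalProjection (direction_le hCA)]

end AffineSubspace

end Orthogonality

variable {E : Type*} [NormedAddCommGroup E] [InnerProductSpace ℝ E] [FiniteDimensional ℝ E]

theorem stmt18_general (A B C : AffineSubspace ℝ E)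
    (h₁ : PerpGo A B) (h₂ : A ⊓ B ≤ C) (h₃ : C ≤ A) :
    PerpGo A (B ⊔ C) := by
  obtain ⟨q, hq, Z₁, Z₂, hqZ₁, hqZ₂, -, hZ₂M, hZ₁Z₂, hA, hB⟩ := h₁
  have hqC : q ∈ C := h₂ hq
  have hZ₂A : Perp Z₂ A := hA ▸ hZ₂M.1.sup_right_s18 hZ₁Z₂.1.symm hq hqZ₁
  have hBC : B ⊔ C = C ⊔ Z₂ := by
    rw [← hB, sup_comm, ← sup_assoc, sup_eq_left.2 h₂]
  rw [hBC, PerpGo, AffineSubspace.inf_sup_eq_of_le_of_perp h₃ hZ₂A hqC hqZ₂]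
  obtain ⟨Z₁', hqZ₁', hZ₁'A, hZ₁'C, hCZ₁'⟩ := AffineSubspace.exists_perp_sup_eq_of_le h₃ hqC
  exact ⟨q, hqC, Z₁', Z₂, hqZ₁', hqZ₂, ⟨hZ₁'C, q, hqZ₁', hqC⟩,
    ⟨hZ₂A.mono_right_s18 h₃, q, hqZ₂, hqC⟩, ⟨(hZ₂A.mono_right_s18 hZ₁'A).symm, q, hqZ₁', hqZ₂⟩, hCZ₁', rfl⟩

theorem stmt18 (A B C : AffineSubspace ℝ E)
    (hA : (A : Set E).Nonempty) (hB : (B : Set E).Nonempty) (hC : (C : Set E).Nonempty)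
    (h₁ : PerpGo A B) (h₂ : A ⊓ B ≤ C) (h₃ : C ≤ A) :
    PerpGo A (B ⊔ C) :=
  stmt18_general A B C h₁ h₂ h₃
end
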